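/- arXiv:1302.7109 — 2 statements merged into one kernel-verified Lean document; each statement's English description precedes it below -/
import Mathlib

section
/- Let (G, +) be a commutative groupoid, let n ≥ 4, and let M and M' be multisets of cardinality n over G. Assume that N_M(x) = N_{M'}(x) for all x ∈ G and that there exists y ∈ G such that N_M(y) is not a multiple of C(n−1,2). Then there exist elements a, b ∈ G such that M' = (M \ ⟨a⟩) ⊎ ⟨b⟩. -/
/-- The multiset ⟨m 1, …, m n⟩ determined by a tuple. -/
def msOfFn {G : Type*} {n : ℕ} (m : Fin n → G) : Multiset G := (List.ofFn m : List G)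

/-- The card M_{i,j} of the multiset ⟨m 1, …, m n⟩ (for a commutative groupoid
operation `op`): replace the two entries at positions `i` and `j` by their sum. -/
def mcard {G : Type*} (op : G → G → G) {n : ℕ} (m : Fin n → G) (i j : Fin n) :
    Multiset G :=
  ((Finset.univ.filter (fun k : Fin n => k ≠ i ∧ k ≠ j)).val.map m) + {op (m i) (m j)}

/-- The deck of the multiset ⟨m 1, …, m n⟩: the multiset of all C(n,2) cards. -/
def mdeck {G : Type*} (op : G → G → G) {n : ℕ} (m : Fin n → G) :
    Multiset (Multiset G) :=
  (Finset.univ.filter (fun p : Fin n × Fin n => p.1 < p.2)).val.map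
    (fun p => mcard op m p.1 p.2)

/-!
Every entry `m k` survives unchanged in the `C(n-1,2)` cards `M_I` with `k ∉ I`, so the
sum of the deck is `c • M + S(M)`, where `c = C(n-1,2)` and `S(M)` is the multiset of the
`C(n,2) = c + (n-1)` pairwise sums. Cancelling `M ∩ M'` in `c • M + S(M) = c • M' + S(M')`
gives `c • (M - M') ≤ S(M')`. For `n ≥ 4` we have `n - 1 ≤ c`, so `|S(M')| ≤ 2c`; if
`M - M'` had two elements, this would force `S(M') = c • (M - M')` and then
`S(M) = c • (M' - M)`, making every multiplicity in the deck sum divisible by `c`.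
Hence `M - M'`, and with it `M' - M`, has at most one element.
-/

open Finset

theorem Fin.card_filter_lt_and_ne_and_ne {n : ℕ} (k : Fin n) :
    #{p : Fin n × Fin n | p.1 < p.2 ∧ k ≠ p.1 ∧ k ≠ p.2} = (n - 1).choose 2 := by
  have h : ({p : Fin n × Fin n | p.1 < p.2 ∧ k ≠ p.1 ∧ k ≠ p.2} : Finset _)
      = {p ∈ (univ.erase k) ×ˢ (univ.erase k) | p.1 < p.2} := by
    ext p
    simp only [mem_filter, mem_univ, true_and, mem_product, mem_erase, and_true]
    tauto
  rw [h, card_product_filter_lt, card_erase_of_mem (mem_univ k), card_univ, Fintype.card_fin]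

theorem Finset.map_val_eq_sum_singleton {ι α : Type*} (s : Finset ι) (f : ι → α) :
    s.val.map f = ∑ i ∈ s, {f i} := by
  rw [← Multiset.sum_map_singleton (s.val.map f), Multiset.map_map]
  rfl

theorem Nat.le_choose_two {k : ℕ} (hk : 3 ≤ k) : k ≤ k.choose 2 := by
  rw [Nat.choose_two_right, Nat.le_div_iff_mul_le two_pos]
  exact Nat.mul_le_mul_left k (by omega)

namespace Multiset

variable {α : Type*} [DecidableEq α]

theorem eq_nsmul_sub_of_nsmul_add_eq {c : ℕ} {A A' S S' : Multiset α}
    (h : c • A + S = c • A' + S') (hS' : card S' ≤ 2 * c) (hD : 2 ≤ card (A - A')) :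
    S = c • (A' - A) := by
  have hle : c • (A - A') ≤ S' := by
    refine le_iff_count.2 fun x => ?_
    have hx := congr_arg (count x) h
    simp only [count_add, count_nsmul, count_sub, Nat.mul_sub] at hx ⊢
    omega
  have hS'eq : c • (A - A') = S' :=
    eq_of_le_of_card_le hle (by rw [card_nsmul]; nlinarith)
  ext x
  have hx := congr_arg (count x) h
  rw [← hS'eq] at hx
  simp only [count_add, count_nsmul, count_sub, Nat.mul_sub] at hx ⊢
  omega

theorem exists_eq_erase_add_singleton {A A' : Multiset α} (hA : A ≠ 0)
    (hcard : card A' = card A) (h : card (A - A') ≤ 1) : ∃ a b, A' = A.erase a + {b} := by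
  have hsymm : card (A' - A) = card (A - A') := by
    have hunion := congr_arg card (union_comm A A')
    rw [union_def, union_def, card_add, card_add] at hunion
    omega
  have hdecomp : A' = A - (A - A') + (A' - A) := by
    ext x
    simp only [count_add, count_sub]
    omega
  obtain h0 | h1 : card (A - A') = 0 ∨ card (A - A') = 1 := by omega
  · obtain ⟨a, ha⟩ := exists_mem_of_ne_zero hA
    refine ⟨a, a, ?_⟩
    rw [hdecomp, card_eq_zero.1 h0, card_eq_zero.1 (hsymm.trans h0), tsub_zero, add_zero,
      add_comm, singleton_add, cons_erase ha]
  · obtain ⟨a, ha⟩ := card_eq_one.1 h1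
    obtain ⟨b, hb⟩ := card_eq_one.1 (hsymm.trans h1)
    exact ⟨a, b, by rw [hdecomp, ha, hb, sub_singleton]⟩

end Multiset

section Deck

variable {G : Type*} (op : G → G → G) {n : ℕ} (m : Fin n → G)

def pairSums : Multiset G :=
  (univ.filter (fun p : Fin n × Fin n => p.1 < p.2)).val.map (fun p => op (m p.1) (m p.2))

theorem card_pairSums : Multiset.card (pairSums op m) = n.choose 2 := by
  rw [pairSums, Multiset.card_map, card_val, Fintype.card_product_filter_lt, Fintype.card_fin]

theorem card_msOfFn : Multiset.card (msOfFn m) = n := by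
  simp [msOfFn]

theorem sum_mdeck : (mdeck op m).sum = (n - 1).choose 2 • msOfFn m + pairSums op m := by
  have hsurvive (k : Fin n) :
      ∑ p : Fin n × Fin n with p.1 < p.2 ∧ k ≠ p.1 ∧ k ≠ p.2, ({m k} : Multiset G)
        = (n - 1).choose 2 • {m k} := by
    rw [sum_const, Fin.card_filter_lt_and_ne_and_ne]
  calc (mdeck op m).sum
      = ∑ p : Fin n × Fin n with p.1 < p.2, ∑ k : Fin n with k ≠ p.1 ∧ k ≠ p.2, {m k}
          + pairSums op m := by
        rw [mdeck, sum_map_val, pairSums, map_val_eq_sum_singleton, ← sum_add_distrib]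
        refine sum_congr rfl fun p _ => ?_
        rw [mcard, map_val_eq_sum_singleton]
    _ = ∑ k : Fin n, ∑ p : Fin n × Fin n with p.1 < p.2 ∧ k ≠ p.1 ∧ k ≠ p.2, {m k}
          + pairSums op m := by
        rw [sum_comm' (t' := univ)
          (s' := fun k => {p : Fin n × Fin n | p.1 < p.2 ∧ k ≠ p.1 ∧ k ≠ p.2})]
        simp
    _ = (n - 1).choose 2 • msOfFn m + pairSums op m := by
        simp_rw [hsurvive, ← smul_sum, ← map_val_eq_sum_singleton, Fin.univ_val_map]
        rfl

end Deck

theorem stmt1_general {G : Type*} [DecidableEq G] (op : G → G → G)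
    {n : ℕ} (hn : 4 ≤ n)
    (m m' : Fin n → G)
    (hN : ∀ x : G,
      Multiset.count x (mdeck op m).sum = Multiset.count x (mdeck op m').sum)
    (hy : ∃ y : G, ¬ ((n - 1).choose 2 ∣ Multiset.count y (mdeck op m).sum)) :
    ∃ a b : G, msOfFn m' = (msOfFn m).erase a + {b} := by
  obtain ⟨y, hy⟩ := hy
  set c := (n - 1).choose 2
  have hdeck : c • msOfFn m + pairSums op m = c • msOfFn m' + pairSums op m' := by
    rw [← sum_mdeck, ← sum_mdeck]
    exact Multiset.ext.2 hN
  have hcard : Multiset.card (pairSums op m') ≤ 2 * c := by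
    have hpascal : n.choose 2 = (n - 1) + c := by
      rw [← Nat.choose_one_right (n - 1), ← Nat.choose_succ_succ', Nat.sub_add_cancel (by omega)]
    rw [card_pairSums, hpascal]
    linarith [Nat.le_choose_two (k := n - 1) (by omega)]
  have hsub : Multiset.card (msOfFn m - msOfFn m') ≤ 1 := by
    by_contra! h
    apply hy
    rw [sum_mdeck, Multiset.eq_nsmul_sub_of_nsmul_add_eq hdeck hcard h, ← nsmul_add,
      Multiset.count_nsmul]
    exact dvd_mul_right _ _
  refine Multiset.exists_eq_erase_add_singleton ?_ (by rw [card_msOfFn, card_msOfFn]) hsub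
  rw [← Multiset.card_pos, card_msOfFn]
  omega

theorem stmt1 {G : Type*} [DecidableEq G] (op : G → G → G)
    (hcomm : ∀ a b : G, op a b = op b a) {n : ℕ} (hn : 4 ≤ n)
    (m m' : Fin n → G)
    (hN : ∀ x : G,
      Multiset.count x (mdeck op m).sum = Multiset.count x (mdeck op m').sum)
    (hy : ∃ y : G, ¬ ((n - 1).choose 2 ∣ Multiset.count y (mdeck op m).sum)) :
    ∃ a b : G, msOfFn m' = (msOfFn m).erase a + {b} :=
  stmt1_general op hn m m' hN hy
end

section
/- Let (G, +) be a commutative groupoid with elements r, s, t satisfying (r + s) + (r + t) = r, (r + s) + (s + t) = s, and (r + t) + (s + t) = t. Then the multisets M = ⟨r, s, t⟩ and M' = ⟨r + s, r + t, s + t⟩ satisfy deck M = deck M' = ⟨⟨r, s + t⟩, ⟨s, r + t⟩, ⟨t, r + s⟩⟩. -/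
theorem mdeck_fin_three {G : Type*} (op : G → G → G) (a b c : G) :
    mdeck op ![a, b, c] = {{a, op b c}, {b, op a c}, {c, op a b}} := by
  -- listing the pairs in this order makes the cards come out in the order stated, so `rfl` closes
  have hpairs : (Finset.univ.filter (fun p : Fin 3 × Fin 3 => p.1 < p.2)).val =
      {(1, 2), (0, 2), (0, 1)} := by decide
  rw [mdeck, hpairs]
  rfl

theorem Multiset.triple_eq_reverse {α : Type*} (x y z : α) :
    ({x, y, z} : Multiset α) = {z, y, x} :=
  Multiset.coe_eq_coe.mpr (List.reverse_perm _).symm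

theorem stmt8_general {G : Type*} (op : G → G → G)
    (r s t : G)
    (h1 : op (op r s) (op r t) = r) (h2 : op (op r s) (op s t) = s)
    (h3 : op (op r t) (op s t) = t) :
    mdeck op ![r, s, t] = mdeck op ![op r s, op r t, op s t] ∧
    mdeck op ![r, s, t] =
      ({({r, op s t} : Multiset G), {s, op r t}, {t, op r s}} : Multiset (Multiset G)) := by
  refine ⟨?_, mdeck_fin_three op r s t⟩
  rw [mdeck_fin_three, mdeck_fin_three, h1, h2, h3, Multiset.pair_comm (op r s),
    Multiset.pair_comm (op r t), Multiset.pair_comm (op s t)]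
  exact Multiset.triple_eq_reverse _ _ _

theorem stmt8 {G : Type*} (op : G → G → G)
    (hcomm : ∀ a b : G, op a b = op b a)
    (r s t : G)
    (h1 : op (op r s) (op r t) = r) (h2 : op (op r s) (op s t) = s)
    (h3 : op (op r t) (op s t) = t) :
    mdeck op ![r, s, t] = mdeck op ![op r s, op r t, op s t] ∧
    mdeck op ![r, s, t] =
      ({({r, op s t} : Multiset G), {s, op r t}, {t, op r s}} : Multiset (Multiset G)) :=
  stmt8_general op r s t h1 h2 h3
end
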